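/- For every real p with 0 < p < 7/10, the series Σ_{k=0}^∞ p^{2^k} satisfies Σ_{k=0}^∞ p^{2^k} ≤ p + (1/log 2)·log(1/(1−p)). -/

import Mathlib

/-! Since `2 ^ (k + 1) ≥ 2 (k + 1)`, the tail `Σ_{k ≥ 1} p^{2^k}` is dominated by the geometric
series `Σ_{k ≥ 1} p^{2k} = p² / (1 - p²)`. For `p < 7/10` this is at most `p / log 2`, because
`p log 2 ≤ 1 - p²` there, and `p ≤ log (1 / (1 - p))` for every `p < 1`. -/

open Real

lemma summable_pow_two_pow {p : ℝ} (h0 : 0 ≤ p) (h1 : p < 1) :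
    Summable fun k : ℕ => p ^ 2 ^ k :=
  (summable_geometric_of_lt_one h0 h1).of_nonneg_of_le (fun _ => by positivity)
    fun _ => pow_le_pow_of_le_one h0 h1.le Nat.lt_two_pow_self.le

lemma pow_two_pow_succ_le {p : ℝ} (h0 : 0 ≤ p) (h1 : p ≤ 1) (k : ℕ) :
    p ^ 2 ^ (k + 1) ≤ p ^ 2 * (p ^ 2) ^ k := by
  rw [← pow_mul, ← pow_add]
  refine pow_le_pow_of_le_one h0 h1 ?_
  have : k < 2 ^ k := Nat.lt_two_pow_self
  rw [pow_succ]
  omega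

lemma tsum_pow_two_pow_le {p : ℝ} (h0 : 0 ≤ p) (h1 : p < 1) :
    ∑' k : ℕ, p ^ 2 ^ k ≤ p + p ^ 2 / (1 - p ^ 2) := by
  have hp2 : p ^ 2 < 1 := pow_lt_one₀ h0 h1 two_ne_zero
  have hgeom : HasSum (fun k : ℕ => p ^ 2 * (p ^ 2) ^ k) (p ^ 2 / (1 - p ^ 2)) :=
    (hasSum_geometric_of_lt_one (by positivity) hp2).mul_left (p ^ 2)
  have htail : Summable fun k : ℕ => p ^ 2 ^ (k + 1) :=
    (summable_pow_two_pow h0 h1).comp_injective (add_left_injective 1)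
  rw [(summable_pow_two_pow h0 h1).tsum_eq_zero_add, pow_zero, pow_one]
  have := hasSum_le (pow_two_pow_succ_le h0 h1.le) htail.hasSum hgeom
  linarith

lemma sq_div_one_sub_sq_le_div_log_two {p : ℝ} (h0 : 0 < p) (h1 : p < 7 / 10) :
    p ^ 2 / (1 - p ^ 2) ≤ p / log 2 := by
  have hlog2 : 0 < log 2 := log_pos one_lt_two
  rw [div_le_div_iff₀ (by nlinarith) hlog2]
  nlinarith [log_two_lt_d9]

lemma le_log_one_div_one_sub {p : ℝ} (h : p < 1) : p ≤ log (1 / (1 - p)) := by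
  simpa using one_sub_inv_le_log_of_pos (one_div_pos.2 (sub_pos.2 h))

/-- **Lemma (doubly exponential series).** For `0 < p < 7/10`,
`Σ_{k=0}^∞ p^{2^k} ≤ p + (1/log 2)·log(1/(1−p))`. -/
theorem double_exp_sum_le (p : ℝ) (h0 : 0 < p) (h1 : p < 7 / 10) :
    (∑' k : ℕ, p ^ (2 ^ k)) ≤ p + (1 / Real.log 2) * Real.log (1 / (1 - p)) := by
  have hp1 : p < 1 := by linarith
  calc ∑' k : ℕ, p ^ 2 ^ k ≤ p + p ^ 2 / (1 - p ^ 2) := tsum_pow_two_pow_le h0.le hp1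
    _ ≤ p + p / log 2 := by grw [sq_div_one_sub_sq_le_div_log_two h0 h1]
    _ ≤ p + 1 / log 2 * log (1 / (1 - p)) := by
      rw [one_div_mul_eq_div]
      gcongr
      exact le_log_one_div_one_sub hp1
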